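/- arXiv:1906.10481 — 6 statements merged into one kernel-verified Lean document; each statement's English description precedes it below -/
import Mathlib

section
/- A group G is strongly bounded (every action of G by isometries on a metric space has bounded orbits) if and only if for every sequence {Z_m} of subsets of G satisfying Γ(Z_m) ⊆ Z_{m+1} and ∪_m Z_m = G, there exists m with Z_m = G, where Γ(Z) = Z ∪ {1} ∪ {g⁻¹ : g ∈ Z} ∪ {gh : g,h ∈ Z}. -/
open Pointwise

/-- A group is strongly bounded if every action by isometries on a metric space
has bounded orbits. -/
def StronglyBounded (G : Type*) [Group G] : Prop :=
  ∀ (X : Type) [MetricSpace X] [MulAction G X],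
    (∀ g : G, Isometry fun x : X => g • x) →
    ∀ x : X, Bornology.IsBounded (MulAction.orbit G x)

/-- Γ(Z) = Z ∪ {1} ∪ Z⁻¹ ∪ Z·Z. -/
def GammaSet {G : Type*} [Group G] (Z : Set G) : Set G :=
  Z ∪ {1} ∪ Z⁻¹ ∪ Z * Z

/-!
Both sides say that every group seminorm on `G` is bounded. An isometric action gives the
seminorm `g ↦ d(x, g • x)`, whose sublevel sets `{N ≤ 2 ^ m}` form an exhausting `Γ`-chain.
Conversely, for an exhausting `Γ`-chain the least `m` with `g, g⁻¹ ∈ Z m` is a symmetric length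
with `ℓ (a * b) ≤ ℓ a + ℓ b + 1`; shifted by one away from `1` it is a group norm, i.e. a
left-invariant metric on `G`, and a bounded orbit of `1` bounds `ℓ`, so some `Z m` is all of `G`.
-/

section GammaSet

variable {G : Type*} [Group G] {Z : Set G} {g h : G}

theorem subset_gammaSet : Z ⊆ GammaSet Z := fun _ hg => Or.inl (Or.inl (Or.inl hg))

theorem one_mem_gammaSet : (1 : G) ∈ GammaSet Z := Or.inl (Or.inl (Or.inr rfl))

theorem mul_mem_gammaSet (hg : g ∈ Z) (hh : h ∈ Z) : g * h ∈ GammaSet Z :=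
  Or.inr (Set.mul_mem_mul hg hh)

theorem monotone_of_gammaSet_subset {Z : ℕ → Set G} (hZ : ∀ m, GammaSet (Z m) ⊆ Z (m + 1)) :
    Monotone Z :=
  monotone_nat_of_le_succ fun m => subset_gammaSet.trans (hZ m)

end GammaSet

namespace GroupNorm

variable {G : Type*} [Group G]

open Classical in
/-- The shift by one away from `1` absorbs the additive constant in `mul_le`. -/
noncomputable def ofNatLength (ℓ : G → ℕ) (inv : ∀ g, ℓ g⁻¹ = ℓ g)
    (mul_le : ∀ a b, ℓ (a * b) ≤ ℓ a + ℓ b + 1) : GroupNorm G where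
  toFun g := if g = 1 then 0 else ℓ g + 1
  map_one' := if_pos rfl
  mul_le' a b := by
    by_cases ha : a = 1
    · simp [ha]
    by_cases hb : b = 1
    · simp [hb]
    by_cases hab : a * b = 1
    · simp only [hab, ha, hb, if_true, if_false]
      positivity
    · simp only [hab, ha, hb, if_false]
      exact_mod_cast (show ℓ (a * b) + 1 ≤ ℓ a + 1 + (ℓ b + 1) by linarith [mul_le a b])
  inv' g := by simp [inv]
  eq_one_of_map_eq_zero' g hg := by
    by_contra hg1
    simp only [hg1, if_false] at hg
    exact absurd hg (by positivity)

theorem ofNatLength_of_ne_one {ℓ : G → ℕ} {inv : ∀ g, ℓ g⁻¹ = ℓ g}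
    {mul_le : ∀ a b, ℓ (a * b) ≤ ℓ a + ℓ b + 1} {g : G} (hg : g ≠ 1) :
    ofNatLength ℓ inv mul_le g = ℓ g + 1 :=
  if_neg hg

end GroupNorm

section GammaChain

variable {G : Type*} [Group G] {Z : ℕ → Set G}

noncomputable def chainIndex (Z : ℕ → Set G) (g : G) : ℕ :=
  sInf {m | g ∈ Z m ∧ g⁻¹ ∈ Z m}

theorem chainIndex_inv (g : G) : chainIndex Z g⁻¹ = chainIndex Z g := by
  simp only [chainIndex, inv_inv, and_comm]

variable (hZ : ∀ m, GammaSet (Z m) ⊆ Z (m + 1)) (hU : ⋃ m, Z m = Set.univ)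
include hZ hU

theorem mem_chainIndex (g : G) :
    g ∈ Z (chainIndex Z g) ∧ g⁻¹ ∈ Z (chainIndex Z g) := by
  have hmem : ∀ x : G, ∃ m, x ∈ Z m := fun x => Set.mem_iUnion.1 (hU ▸ Set.mem_univ x)
  obtain ⟨m, hm⟩ := hmem g
  obtain ⟨n, hn⟩ := hmem g⁻¹
  have hmono := monotone_of_gammaSet_subset hZ
  exact Nat.sInf_mem (s := {m | g ∈ Z m ∧ g⁻¹ ∈ Z m})
    ⟨max m n, hmono (le_max_left m n) hm, hmono (le_max_right m n) hn⟩

theorem chainIndex_mul_le (a b : G) :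
    chainIndex Z (a * b) ≤ chainIndex Z a + chainIndex Z b + 1 := by
  set k := max (chainIndex Z a) (chainIndex Z b)
  have hmono := monotone_of_gammaSet_subset hZ
  obtain ⟨ha, ha'⟩ := mem_chainIndex hZ hU a
  obtain ⟨hb, hb'⟩ := mem_chainIndex hZ hU b
  have hab : a * b ∈ Z (k + 1) :=
    hZ k (mul_mem_gammaSet (hmono (le_max_left _ _) ha) (hmono (le_max_right _ _) hb))
  have hab' : (a * b)⁻¹ ∈ Z (k + 1) := by
    rw [mul_inv_rev]
    exact hZ k (mul_mem_gammaSet (hmono (le_max_right _ _) hb') (hmono (le_max_left _ _) ha'))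
  calc chainIndex Z (a * b) ≤ k + 1 := Nat.sInf_le ⟨hab, hab'⟩
    _ ≤ chainIndex Z a + chainIndex Z b + 1 := by omega

noncomputable def chainNorm : GroupNorm G :=
  .ofNatLength (chainIndex Z) chainIndex_inv (chainIndex_mul_le hZ hU)

theorem exists_eq_univ_of_chainNorm_le {C : ℝ} (hC : ∀ g, chainNorm hZ hU g ≤ C) :
    ∃ m, Z m = Set.univ := by
  refine ⟨⌈C⌉₊ + 1, Set.eq_univ_of_forall fun g => ?_⟩
  by_cases hg : g = 1
  · exact hg ▸ hZ _ one_mem_gammaSet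
  have hle : chainIndex Z g ≤ ⌈C⌉₊ + 1 := by
    have := hC g
    rw [chainNorm, GroupNorm.ofNatLength_of_ne_one hg] at this
    have := Nat.le_ceil C
    exact_mod_cast (by linarith : (chainIndex Z g : ℝ) ≤ ⌈C⌉₊ + 1)
  exact monotone_of_gammaSet_subset hZ hle (mem_chainIndex hZ hU g).1

end GammaChain

theorem StronglyBounded.exists_forall_groupNorm_le {G : Type} [Group G] (hG : StronglyBounded G)
    (N : GroupNorm G) : ∃ C, ∀ g, N g ≤ C := by
  let := N.toNormedGroup
  obtain ⟨C, hC⟩ := isBounded_iff_forall_norm_le'.1 (hG G (isometry_smul G) 1)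
  exact ⟨C, fun g => hC g ⟨g, mul_one g⟩⟩

namespace GroupSeminorm

variable {G : Type*} [Group G]

def displacement {X : Type*} [PseudoMetricSpace X] [MulAction G X] [IsIsometricSMul G X] (x : X) :
    GroupSeminorm G where
  toFun g := dist x (g • x)
  map_one' := by simp
  mul_le' a b := calc
    dist x ((a * b) • x) ≤ dist x (a • x) + dist (a • x) ((a * b) • x) := dist_triangle _ _ _
    _ = dist x (a • x) + dist x (b • x) := by rw [mul_smul, dist_smul]
  inv' g := by rw [← dist_smul g, smul_inv_smul, dist_comm]

theorem gammaSet_setOf_le_subset (N : GroupSeminorm G) {r : ℝ} (hr : 0 ≤ r) :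
    GammaSet {g | N g ≤ r} ⊆ {g | N g ≤ 2 * r} := by
  rintro g (((hg | rfl) | hg) | ⟨a, ha, b, hb, rfl⟩)
  · exact (show N g ≤ r from hg).trans (by linarith)
  · exact (map_one_eq_zero N).trans_le (by positivity)
  · exact le_trans ((map_inv_eq_map N g).symm.trans_le hg) (by linarith)
  · exact (map_mul_le_add N a b).trans (by linarith [show N a ≤ r from ha, show N b ≤ r from hb])

theorem iUnion_setOf_le_two_pow (N : GroupSeminorm G) : ⋃ m : ℕ, {g | N g ≤ 2 ^ m} = Set.univ :=
  Set.eq_univ_of_forall fun g =>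
    Set.mem_iUnion.2 <| (pow_unbounded_of_one_lt (N g) one_lt_two).imp fun _ => le_of_lt

theorem exists_forall_le_two_pow
    (hG : ∀ Z : ℕ → Set G, (∀ m, GammaSet (Z m) ⊆ Z (m + 1)) →
      (⋃ m, Z m) = Set.univ → ∃ m, Z m = Set.univ)
    (N : GroupSeminorm G) : ∃ m : ℕ, ∀ g, N g ≤ 2 ^ m := by
  have hsub (m : ℕ) : GammaSet {g | N g ≤ 2 ^ m} ⊆ {g | N g ≤ 2 ^ (m + 1)} := by
    rw [pow_succ']
    exact N.gammaSet_setOf_le_subset (by positivity)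
  obtain ⟨m, hm⟩ := hG _ hsub N.iUnion_setOf_le_two_pow
  exact ⟨m, fun g => (hm ▸ Set.mem_univ g : g ∈ {g | N g ≤ 2 ^ m})⟩

end GroupSeminorm

theorem strongly_bounded_iff (G : Type) [Group G] :
    StronglyBounded G ↔
      ∀ Z : ℕ → Set G, (∀ m, GammaSet (Z m) ⊆ Z (m + 1)) →
        (⋃ m, Z m) = Set.univ → ∃ m, Z m = Set.univ := by
  refine ⟨fun hG Z hZ hU => ?_, fun hG X _ _ hiso x => ?_⟩
  · obtain ⟨C, hC⟩ := hG.exists_forall_groupNorm_le (chainNorm hZ hU)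
    exact exists_eq_univ_of_chainNorm_le hZ hU hC
  · have : IsIsometricSMul G X := ⟨hiso⟩
    obtain ⟨m, hm⟩ := (GroupSeminorm.displacement (G := G) x).exists_forall_le_two_pow hG
    refine (Metric.isBounded_closedBall (x := x) (r := 2 ^ m)).subset ?_
    rintro _ ⟨g, rfl⟩
    exact Metric.mem_closedBall'.2 (hm g)
end

section
/- An infinite group whose cardinality has countable cofinality is not strongly bounded. -/
open Pointwise

/-!
Since `#G` has countable cofinality, `G` is the union of an increasing sequence `Sₙ` of subsets
of smaller cardinality. The sets `Zₙ = Tₙ ^ n`, where `Tₙ = {1} ∪ Sₙ ∪ Sₙ⁻¹`, are still smaller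
than `G`, hence proper; they are symmetric, exhaust `G` and satisfy `Zₘ * Zₙ ⊆ Zₘ₊ₙ`. Hence
`f g = min {n | g ∈ Zₙ}` is an unbounded group norm, and left multiplication is isometric for the
left-invariant metric `f (a⁻¹ * b)`, in which the orbit `G` of `1` is unbounded.
-/

open Set
open scoped Cardinal

theorem Cardinal.mk_pow_lt {M : Type*} [Monoid M] {s : Set M} {κ : Cardinal} (hκ : ℵ₀ ≤ κ)
    (hs : #s < κ) (n : ℕ) : #↥(s ^ n) < κ := by
  induction n with
  | zero => simpa using one_lt_aleph0.trans_le hκ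
  | succ n ih => exact (pow_succ s n ▸ mk_mul_le).trans_lt (mul_lt_of_lt hκ ih hs)

theorem Cardinal.exists_monotone_mk_lt_iUnion_eq_univ {α : Type*} (h : (#α).ord.cof = ℵ₀) :
    ∃ S : ℕ → Set α, Monotone S ∧ (∀ n, #(S n) < #α) ∧ ⋃ n, S n = Set.univ := by
  have hα : ℵ₀ ≤ #α := h ▸ Ordinal.cof_ord_le _
  obtain ⟨_, _, hord⟩ := exists_ord_eq_type_lt α
  obtain ⟨s, hs, hs_card⟩ := Order.exists_cof_eq α
  rw [← Ordinal.cof_type, ← hord, h] at hs_card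
  obtain ⟨x, rfl⟩ := Countable.exists_eq_range (countable_coe_iff.1 (mk_le_aleph0_iff.1 hs_card.le))
    (nonempty_coe_sort.1 (mk_ne_zero_iff.1 (hs_card ▸ aleph0_ne_zero)))
  refine ⟨fun n ↦ Iic (partialSups x n), fun m n hmn ↦ Iic_subset_Iic.2 ((partialSups x).mono hmn),
    fun n ↦ ?_, eq_univ_of_forall fun a ↦ ?_⟩
  · dsimp only
    rw [← Iio_insert]
    exact mk_insert_le.trans_lt (add_lt_of_lt hα (mk_Iio_lt _ hord) (one_lt_aleph0.trans_le hα))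
  · obtain ⟨_, ⟨n, rfl⟩, hn⟩ := hs a
    exact mem_iUnion.2 ⟨n, hn.trans (le_partialSups x n)⟩

namespace GroupNorm

variable {G : Type*} [Group G] (Z : ℕ → Set G) (zero : Z 0 = 1) (inv : ∀ n, (Z n)⁻¹ = Z n)
  (mul : ∀ m n, Z m * Z n ⊆ Z (m + n)) (cover : ∀ g, ∃ n, g ∈ Z n)

open Classical in
noncomputable def ofFiltration : GroupNorm G where
  toFun g := Nat.find (cover g)
  map_one' := by simp [zero]
  mul_le' a b := by
    exact_mod_cast Nat.find_le <|
      mul _ _ (mul_mem_mul (Nat.find_spec (cover a)) (Nat.find_spec (cover b)))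
  inv' g := by
    simp only [Nat.cast_inj]
    exact Nat.find_congr' fun {n} ↦ by rw [← mem_inv, inv]
  eq_one_of_map_eq_zero' g h := by
    simpa [zero] using (Nat.find_eq_zero (cover g)).1 (by exact_mod_cast h)

theorem mem_of_ofFiltration_le (hmono : Monotone Z) {g : G} {n : ℕ}
    (h : ofFiltration Z zero inv mul cover g ≤ n) : g ∈ Z n := by
  classical
  exact hmono ((Nat.cast_le (α := ℝ)).1 h) (Nat.find_spec (cover g))

end GroupNorm

theorem not_stronglyBounded_of_groupNorm {G : Type} [Group G] (f : GroupNorm G)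
    (hf : ¬BddAbove (range f)) : ¬StronglyBounded G := by
  intro hbdd
  let : MetricSpace G :=
    { dist a b := f (a⁻¹ * b)
      dist_self a := by simp
      dist_comm a b := by rw [← map_inv_eq_map f, mul_inv_rev, inv_inv]
      dist_triangle a b c := by simpa [mul_assoc] using map_mul_le_add f (a⁻¹ * b) (b⁻¹ * c)
      eq_of_dist_eq_zero h := inv_mul_eq_one.1 (eq_one_of_map_eq_zero f h) }
  have hisom (g : G) : Isometry fun x : G ↦ g • x := Isometry.of_dist_eq fun x y ↦ by
    change f ((g * x)⁻¹ * (g * y)) = f (x⁻¹ * y)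
    simp [mul_assoc]
  obtain ⟨r, hr⟩ := (Metric.isBounded_iff_subset_closedBall 1).1 (hbdd G hisom 1)
  refine hf ⟨r, ?_⟩
  rintro _ ⟨g, rfl⟩
  have : f (g⁻¹ * 1) ≤ r := hr ⟨g, mul_one g⟩
  simpa using this

theorem not_stronglyBounded_of_pow_ne_univ {G : Type} [Group G] {T : ℕ → Set G}
    (hmono : Monotone T) (hone : ∀ n, 1 ∈ T n) (hinv : ∀ n, (T n)⁻¹ = T n)
    (hcover : ⋃ n, T n = univ) (hproper : ∀ n, T n ^ n ≠ univ) : ¬StronglyBounded G := by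
  let Z : ℕ → Set G := fun n ↦ T n ^ n
  have zero : Z 0 = 1 := pow_zero _
  have inv (n : ℕ) : (Z n)⁻¹ = Z n := by rw [← inv_pow, hinv]
  have mul (m n : ℕ) : Z m * Z n ⊆ Z (m + n) := by
    simp only [Z, pow_add]
    exact mul_subset_mul (pow_subset_pow_left (hmono le_self_add))
      (pow_subset_pow_left (hmono le_add_self))
  have cover (g : G) : ∃ n, g ∈ Z n := by
    obtain ⟨n, hn⟩ := mem_iUnion.1 (hcover ▸ mem_univ g)
    exact ⟨n + 1, pow_subset_pow (hmono n.le_succ) (hone _) n.succ_pos (by rwa [pow_one])⟩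
  have hZmono : Monotone Z :=
    monotone_nat_of_le_succ fun n ↦ pow_subset_pow (hmono n.le_succ) (hone _) n.le_succ
  refine not_stronglyBounded_of_groupNorm (.ofFiltration Z zero inv mul cover) fun ⟨r, hr⟩ ↦ ?_
  obtain ⟨g, hg⟩ := ne_univ_iff_exists_notMem _ |>.1 (hproper ⌈r⌉₊)
  exact hg (GroupNorm.mem_of_ofFiltration_le Z zero inv mul cover hZmono
    ((hr ⟨g, rfl⟩).trans (Nat.le_ceil r)))

theorem not_stronglyBounded_of_iUnion_mk_lt {G : Type} [Group G] (hG : ℵ₀ ≤ #G)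
    {S : ℕ → Set G} (hmono : Monotone S) (hsmall : ∀ n, #(S n) < #G)
    (hcover : ⋃ n, S n = univ) : ¬StronglyBounded G := by
  set T : ℕ → Set G := fun n ↦ insert 1 (S n ∪ (S n)⁻¹)
  have hTsmall (n : ℕ) : #(T n) < #G :=
    Cardinal.mk_insert_le.trans_lt <| Cardinal.add_lt_of_lt hG
      ((Cardinal.mk_union_le _ _).trans_lt <|
        Cardinal.add_lt_of_lt hG (hsmall n) ((Cardinal.mk_inv _).trans_lt (hsmall n)))
      (Cardinal.one_lt_aleph0.trans_le hG)
  refine not_stronglyBounded_of_pow_ne_univ (T := T)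
    (fun m n h ↦ insert_subset_insert (union_subset_union (hmono h) (inv_subset_inv.2 (hmono h))))
    (fun n ↦ mem_insert _ _) (fun n ↦ by simp [T, inv_insert, union_comm])
    (eq_univ_of_forall fun g ↦ ?_) fun n h ↦ ?_
  · obtain ⟨n, hn⟩ := mem_iUnion.1 (hcover ▸ mem_univ g)
    exact mem_iUnion.2 ⟨n, .inr (.inl hn)⟩
  · simpa [h] using Cardinal.mk_pow_lt hG (hTsmall n) n

theorem countable_cofinality_not_stronglyBounded_general (G : Type) [Group G]
    (hcof : (Cardinal.mk G).ord.cof = Cardinal.aleph0) : ¬ StronglyBounded G := by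
  obtain ⟨S, hmono, hsmall, hcover⟩ := Cardinal.exists_monotone_mk_lt_iUnion_eq_univ hcof
  exact not_stronglyBounded_of_iUnion_mk_lt (hcof ▸ Ordinal.cof_ord_le _) hmono hsmall hcover

theorem countable_cofinality_not_stronglyBounded (G : Type) [Group G] [Infinite G]
    (hcof : (Cardinal.mk G).ord.cof = Cardinal.aleph0) : ¬ StronglyBounded G :=
  countable_cofinality_not_stronglyBounded_general G hcof
end

section
/- Let G be a group that is the increasing union of subgroups G_α for α < κ, where κ is a regular uncountable cardinal, G_α ⊆ G_β for α ≤ β, and each G_α is strongly bounded. Then G is strongly bounded. -/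
open Pointwise

theorem stronglyBounded_of_union_regular (G : Type) [Group G] (κ : Cardinal)
    (hreg : κ.IsRegular) (hunc : Cardinal.aleph0 < κ)
    (H : Ordinal → Subgroup G)
    (hmono : ∀ α β, α ≤ β → β < κ.ord → H α ≤ H β)
    (hsb : ∀ α, α < κ.ord → StronglyBounded (H α))
    (hunion : (⋃ α ∈ Set.Iio κ.ord, (H α : Set G)) = Set.univ) :
    StronglyBounded G := by
  intro X _ _ hiso x
  by_contra hb
  rw [Metric.isBounded_iff_subset_closedBall x] at hb
  push_neg at hb
  have hg : ∀ n : ℕ, ∃ g : G, (n : ℝ) < dist (g • x) x := by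
    intro n
    obtain ⟨y, hy, hy'⟩ := Set.not_subset.mp (hb n)
    obtain ⟨g, rfl⟩ := hy
    exact ⟨g, by simpa [Metric.mem_closedBall, not_le] using hy'⟩
  choose g hgd using hg
  have hmem : ∀ n : ℕ, ∃ α < κ.ord, g n ∈ H α := by
    intro n
    have : g n ∈ (⋃ α ∈ Set.Iio κ.ord, (H α : Set G)) := hunion ▸ Set.mem_univ _
    simpa using this
  choose α hα hαmem using hmem
  set β := ⨆ n, α n with hβ
  have hβlt : β < κ.ord := by
    apply Ordinal.iSup_lt_ord_lift _ hα
    rw [hreg.cof_eq]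
    simpa using hunc
  have hmemβ : ∀ n, g n ∈ H β := fun n =>
    hmono (α n) β (le_ciSup (Ordinal.bddAbove_range _) n) hβlt (hαmem n)
  have hiso' : ∀ h : H β, Isometry fun y : X => h • y := fun h => hiso (h : G)
  have hbdd := hsb β hβlt X hiso' x
  rw [Metric.isBounded_iff_subset_closedBall x] at hbdd
  obtain ⟨r, hr⟩ := hbdd
  obtain ⟨n, hn⟩ := exists_nat_gt r
  have : g n • x ∈ Metric.closedBall x r :=
    hr ⟨⟨g n, hmemβ n⟩, rfl⟩
  rw [Metric.mem_closedBall] at this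
  linarith [hgd n]
end

section
/- For every T = ∏_{n∈ω} T_n with each T_n ⊆ ω of cardinality at most n+1, there exists a strictly increasing g ∈ ω^ω such that for every strictly increasing f ∈ T: f(n) < g(n) for all n, and whenever g(n) ≥ f(m) we have g(n+1) > f(m+2). -/
theorem exists_dominating_function (T : ℕ → Finset ℕ) (hT : ∀ n, (T n).card ≤ n + 1) :
    ∃ g : ℕ → ℕ, StrictMono g ∧
      ∀ f : ℕ → ℕ, (∀ n, f n ∈ T n) → StrictMono f →
        (∀ n, f n < g n) ∧ ∀ n m, f m ≤ g n → f (m + 2) < g (n + 1) := by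
  set B : ℕ → ℕ := fun k => (T k).sup id with hB
  set g : ℕ → ℕ := fun n => Nat.rec (B 0 + 1)
      (fun n gn => (Finset.range (gn + 3)).sup B + gn + 1) n with hg
  have hgsucc : ∀ n, g (n + 1) = (Finset.range (g n + 3)).sup B + g n + 1 := fun n => rfl
  have hmono : StrictMono g := by
    apply strictMono_nat_of_lt_succ
    intro n
    rw [hgsucc]
    omega
  have hBg : ∀ n, B n < g n := by
    intro n
    cases n with
    | zero => simp [hg]
    | succ k =>
      have hk : k ≤ g k := hmono.le_apply
      have h1 : B (k + 1) ≤ (Finset.range (g k + 3)).sup B :=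
        Finset.le_sup (Finset.mem_range.mpr (by omega))
      rw [hgsucc]; omega
  refine ⟨g, hmono, fun f hfT hf => ⟨?_, ?_⟩⟩
  · intro n
    have : f n ≤ B n := Finset.le_sup (f := id) (hfT n)
    exact lt_of_le_of_lt this (hBg n)
  · intro n m hmn
    have hm : m ≤ f m := hf.le_apply
    have h1 : f (m + 2) ≤ B (m + 2) := Finset.le_sup (f := id) (hfT (m + 2))
    have h2 : B (m + 2) ≤ (Finset.range (g n + 3)).sup B :=
      Finset.le_sup (Finset.mem_range.mpr (by omega))
    rw [hgsucc]; omega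
end

section
/- If f: A → ω corresponds to a proper R-filtration of an infinite Boolean algebra A, then there exists a sequence {a_n}_{n∈ω} of pairwise disjoint elements of A (a_n ∧ a_m = 0 for n ≠ m) with f(a_0) < f(a_1) < f(a_2) < ⋯. -/
/-- R(Z) = Z with 0, 1, complements, joins, meets and differences added. -/
def RSet {A : Type*} [BooleanAlgebra A] (Z : Set A) : Set A :=
  Z ∪ {⊥, ⊤} ∪ (compl '' Z) ∪ Set.image2 (· ⊔ ·) Z Z ∪ Set.image2 (· ⊓ ·) Z Z ∪
    Set.image2 (· \ ·) Z Z

/-- A proper R-filtration of a Boolean algebra. -/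
def IsProperRFiltration {A : Type*} [BooleanAlgebra A] (Z : ℕ → Set A) : Prop :=
  (∀ n, Z n ⊂ Z (n + 1)) ∧ (∀ n, RSet (Z n) ⊆ Z (n + 1)) ∧ (⋃ n, Z n) = Set.univ

/-- `f` is the function induced by the filtration `Z`: `f x = min {n | x ∈ Z n}`. -/
def IsInducedBy {A : Type*} [BooleanAlgebra A] (f : A → ℕ) (Z : ℕ → Set A) : Prop :=
  ∀ x, x ∈ Z (f x) ∧ ∀ k, x ∈ Z k → f x ≤ k

theorem exists_disjoint_antichain_of_filtration (A : Type) [BooleanAlgebra A]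
    [Infinite A] (Z : ℕ → Set A) (hZ : IsProperRFiltration Z)
    (f : A → ℕ) (hf : IsInducedBy f Z) :
    ∃ a : ℕ → A, (∀ n m, n ≠ m → a n ⊓ a m = ⊥) ∧
      StrictMono fun n => f (a n) := by
  classical
  obtain ⟨hZ1, hZ2, -⟩ := hZ
  have Zmono : ∀ {n m : ℕ}, n ≤ m → Z n ⊆ Z m := by
    intro n m h
    induction h with
    | refl => exact subset_rfl
    | step h ih => exact ih.trans (hZ1 _).subset
  have fle : ∀ (x : A) (n : ℕ), x ∈ Z n → f x ≤ n := fun x n h => (hf x).2 n h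
  have fsup : ∀ x y : A, f (x ⊔ y) ≤ max (f x) (f y) + 1 := by
    intro x y
    apply fle
    apply hZ2
    have hx : x ∈ Z (max (f x) (f y)) := Zmono (le_max_left _ _) (hf x).1
    have hy : y ∈ Z (max (f x) (f y)) := Zmono (le_max_right _ _) (hf y).1
    exact Or.inl (Or.inl (Or.inr ⟨x, hx, y, hy, rfl⟩))
  have fsdiff : ∀ x y : A, f (x \ y) ≤ max (f x) (f y) + 1 := by
    intro x y
    apply fle
    apply hZ2
    have hx : x ∈ Z (max (f x) (f y)) := Zmono (le_max_left _ _) (hf x).1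
    have hy : y ∈ Z (max (f x) (f y)) := Zmono (le_max_right _ _) (hf y).1
    exact Or.inr ⟨x, hx, y, hy, rfl⟩
  have funb : ∀ N : ℕ, ∃ x : A, N < f x := by
    intro N
    obtain ⟨x, hx1, hx2⟩ := Set.exists_of_ssubset (hZ1 N)
    refine ⟨x, ?_⟩
    by_contra h
    push_neg at h
    exact hx2 (Zmono h (hf x).1)
  -- dichotomy: if f is unbounded below b and bounded below b \ y, it is unbounded below y
  have dich : ∀ b y : A, (∀ N, ∃ z, z ≤ b ∧ N < f z) → y ≤ b →
      ¬ (∀ N, ∃ z, z ≤ b \ y ∧ N < f z) → (∀ N, ∃ z, z ≤ y ∧ N < f z) := by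
    intro b y hU hyb hnb N
    push_neg at hnb
    obtain ⟨M, hM⟩ := hnb
    obtain ⟨z, hzb, hz⟩ := hU (max N M + 1)
    have h1 : f z ≤ max (f (z ⊓ y)) (f (z \ y)) + 1 := by
      have := fsup (z ⊓ y) (z \ y)
      rwa [sup_inf_sdiff] at this
    have h2 : f (z \ y) ≤ M := hM (z \ y) (sdiff_le_sdiff_right hzb)
    refine ⟨z ⊓ y, inf_le_right, ?_⟩
    have hN := le_max_left N M
    have hMx := le_max_right N M
    rcases le_total (f (z ⊓ y)) (f (z \ y)) with h | h
    · rw [max_eq_right h] at h1; omega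
    · rw [max_eq_left h] at h1; omega
  -- key step: find x below b with large f such that f is still unbounded below b \ x
  have key : ∀ b : A, (∀ N, ∃ z, z ≤ b ∧ N < f z) → ∀ N : ℕ,
      ∃ x, x ≤ b ∧ N < f x ∧ (∀ K, ∃ z, z ≤ b \ x ∧ K < f z) := by
    intro b hU N
    obtain ⟨z, hzb, hz⟩ := hU (max N (f b) + 1)
    have hzz : b \ (b \ z) = z := sdiff_sdiff_eq_self hzb
    have h1 : f z ≤ max (f b) (f (b \ z)) + 1 := by
      have := fsdiff b (b \ z)
      rwa [hzz] at this
    have hN : N < f z := by have := le_max_left N (f b); omega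
    have h2 : N < f (b \ z) := by
      have hb := le_max_right N (f b)
      rcases le_total (f b) (f (b \ z)) with h | h
      · rw [max_eq_right h] at h1; omega
      · rw [max_eq_left h] at h1; omega
    by_cases hc : ∀ K, ∃ w, w ≤ b \ z ∧ K < f w
    · exact ⟨z, hzb, hN, hc⟩
    · refine ⟨b \ z, sdiff_le, h2, ?_⟩
      rw [hzz]
      exact dich b z hU hzb hc
  -- build the sequence of states (aₙ, bₙ₊₁)
  have hnext : ∀ s : {p : A × A // (∀ N, ∃ z, z ≤ p.2 ∧ N < f z) ∧ Disjoint p.1 p.2},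
      ∃ t : {p : A × A // (∀ N, ∃ z, z ≤ p.2 ∧ N < f z) ∧ Disjoint p.1 p.2},
        t.val.1 ≤ s.val.2 ∧ f s.val.1 < f t.val.1 ∧ t.val.2 ≤ s.val.2 := by
    intro s
    obtain ⟨x, hx, hfx, hU⟩ := key s.val.2 s.prop.1 (f s.val.1)
    exact ⟨⟨(x, s.val.2 \ x), hU, disjoint_sdiff_self_right⟩, hx, hfx, sdiff_le⟩
  choose next h1 h2 h3 using hnext
  obtain ⟨x0, -, hfx0, hU0⟩ :=
    key ⊤ (fun N => (funb N).imp fun x hx => ⟨le_top, hx⟩) 0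
  set s0 : {p : A × A // (∀ N, ∃ z, z ≤ p.2 ∧ N < f z) ∧ Disjoint p.1 p.2} :=
    ⟨(x0, ⊤ \ x0), hU0, disjoint_sdiff_self_right⟩ with hs0
  set F := fun n => next^[n] s0 with hF
  have hFsucc : ∀ n, F (n + 1) = next (F n) := fun n => Function.iterate_succ_apply' next n s0
  have bdec : ∀ n m, n ≤ m → (F m).val.2 ≤ (F n).val.2 := by
    intro n m h
    induction h with
    | refl => exact le_rfl
    | step h ih =>
        rw [hFsucc]
        exact (h3 _).trans ih
  have amem : ∀ n m, n < m → (F m).val.1 ≤ (F n).val.2 := by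
    intro n m h
    obtain ⟨k, rfl⟩ : ∃ k, m = k + 1 := ⟨m - 1, by omega⟩
    rw [hFsucc]
    exact (h1 (F k)).trans (bdec n k (by omega))
  refine ⟨fun n => (F n).val.1, ?_, ?_⟩
  · have main : ∀ n m, n < m → (F n).val.1 ⊓ (F m).val.1 = ⊥ := by
      intro n m h
      exact disjoint_iff.mp ((F n).prop.2.mono_right (amem n m h))
    intro n m hnm
    rcases hnm.lt_or_gt with h | h
    · exact main n m h
    · rw [inf_comm]; exact main m n h
  · apply strictMono_nat_of_lt_succ
    intro n
    simp only [hFsucc]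
    exact h2 (F n)
end

section
/- Let X be a set, A an algebra of subsets of X with strong uncountable cofinality, and H a finite perfect group. Then the group of A-measurable functions from X to H (functions all of whose fibers lie in A), under pointwise multiplication, is strongly bounded. -/
/-- An algebra of sets on `X`: contains `X`, closed under intersection and
complement. -/
def IsSetAlgebra {X : Type*} (A : Set (Set X)) : Prop :=
  Set.univ ∈ A ∧ (∀ s ∈ A, ∀ t ∈ A, s ∩ t ∈ A) ∧ ∀ s ∈ A, sᶜ ∈ A

/-- R(Z) for a family of sets. -/
def RSetFam {X : Type*} (Z : Set (Set X)) : Set (Set X) :=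
  Z ∪ {∅, Set.univ} ∪ (compl '' Z) ∪ Set.image2 (· ∪ ·) Z Z ∪
    Set.image2 (· ∩ ·) Z Z ∪ Set.image2 (· \ ·) Z Z

/-- An algebra of sets has strong uncountable cofinality if it admits no proper
R-filtration. -/
def StrongUncountableCofinality {X : Type*} (A : Set (Set X)) : Prop :=
  ¬ ∃ Z : ℕ → Set (Set X), (∀ n, Z n ⊆ A) ∧ (∀ n, Z n ⊂ Z (n + 1)) ∧
      (∀ n, RSetFam (Z n) ⊆ Z (n + 1)) ∧ (⋃ n, Z n) = A

/-!
For an isometric action and a point `y`, the sets `W n = {g | d(g • y, y) ≤ 2 ^ n}` exhaust the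
group, are symmetric and satisfy `W n * W n ⊆ W (n + 1)`; it suffices that some `W n` is everything.
Let `L n` be the family of sets `S ∈ A` all of whose constant indicators `1_S h` lie in `W n`.
Complements cost one step; since `H` is finite and perfect, every `h` is a product of at most `K`
commutators, and `⁅1_S a, 1_T b⁆ = 1_{S ∩ T} ⁅a, b⁆`, so intersections cost `K + 2` steps.
Thus `L` taken at steps of `K + 4` is closed under `R` and exhausts `A`, so strong uncountable
cofinality puts all of `A` into one level. A measurable function is the product of its `|H|`
fibre indicators, which bounds the whole group.
-/

open Set Filter
open scoped commutatorElement

section GroupFiltration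


variable {G : Type*} [Group G]

structure IsGroupFiltration (W : ℕ → Set G) : Prop where
  one_mem : ∀ n, 1 ∈ W n
  inv_mem : ∀ n, ∀ g ∈ W n, g⁻¹ ∈ W n
  mul_mem : ∀ n, ∀ g ∈ W n, ∀ h ∈ W n, g * h ∈ W (n + 1)

namespace IsGroupFiltration

variable {W : ℕ → Set G}

theorem monotone (hW : IsGroupFiltration W) : Monotone W :=
  monotone_nat_of_le_succ fun n g hg => by
    simpa using hW.mul_mem n g hg 1 (hW.one_mem n)

theorem list_prod_mem (hW : IsGroupFiltration W) {n : ℕ} :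
    ∀ {l : List G}, (∀ g ∈ l, g ∈ W n) → l.prod ∈ W (n + l.length)
  | [], _ => by simpa using hW.one_mem n
  | g :: l, hl => by
    rw [List.prod_cons, List.length_cons, ← add_assoc]
    refine hW.mul_mem _ g (hW.monotone (Nat.le_add_right n _) (hl g List.mem_cons_self)) _ ?_
    exact hW.list_prod_mem fun x hx => hl x (List.mem_cons_of_mem g hx)

theorem commutatorElement_mem (hW : IsGroupFiltration W) {n : ℕ} {g h : G} (hg : g ∈ W n)
    (hh : h ∈ W n) : ⁅g, h⁆ ∈ W (n + 2) := by
  rw [commutatorElement_def, mul_assoc _ g⁻¹]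
  exact hW.mul_mem _ _ (hW.mul_mem n g hg h hh) _
    (hW.mul_mem n _ (hW.inv_mem n g hg) _ (hW.inv_mem n h hh))

theorem map {G' : Type*} [Group G'] (hW : IsGroupFiltration W) (φ : G →* G') :
    IsGroupFiltration fun n => φ '' W n where
  one_mem n := ⟨1, hW.one_mem n, map_one φ⟩
  inv_mem := by
    rintro n _ ⟨g, hg, rfl⟩
    exact ⟨g⁻¹, hW.inv_mem n g hg, map_inv φ g⟩
  mul_mem := by
    rintro n _ ⟨g, hg, rfl⟩ _ ⟨h, hh, rfl⟩
    exact ⟨g * h, hW.mul_mem n g hg h hh, map_mul φ g h⟩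

end IsGroupFiltration

theorem isGroupFiltration_dist_smul_le {Y : Type*} [PseudoMetricSpace Y] [MulAction G Y]
    (hiso : ∀ g : G, Isometry fun y : Y => g • y) (y : Y) :
    IsGroupFiltration fun n => {g : G | dist (g • y) y ≤ 2 ^ n} where
  one_mem n := by simp
  inv_mem n g (hg : dist (g • y) y ≤ 2 ^ n) := by
    rwa [Set.mem_ofPred_eq, ← (hiso g).dist_eq, smul_inv_smul, dist_comm]
  mul_mem n g (hg : dist (g • y) y ≤ 2 ^ n) h (hh : dist (h • y) y ≤ 2 ^ n) :=
    calc dist ((g * h) • y) y ≤ dist (g • h • y) (g • y) + dist (g • y) y :=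
          mul_smul g h y ▸ dist_triangle _ _ _
      _ = dist (h • y) y + dist (g • y) y := by rw [(hiso g).dist_eq]
      _ ≤ 2 ^ (n + 1) := by rw [pow_succ]; linarith

theorem stronglyBounded_of_forall_isGroupFiltration
    (h : ∀ W : ℕ → Set G, IsGroupFiltration W → (∀ g, ∃ n, g ∈ W n) → ∃ n, ∀ g, g ∈ W n) :
    StronglyBounded G := by
  intro Y _ _ hiso y
  obtain ⟨n, hn⟩ := h _ (isGroupFiltration_dist_smul_le hiso y) fun g =>
    (pow_unbounded_of_one_lt (dist (g • y) y) one_lt_two).imp fun _ => le_of_lt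
  refine (Metric.isBounded_closedBall (x := y) (r := 2 ^ n)).subset ?_
  rintro _ ⟨g, rfl⟩
  exact hn g

end GroupFiltration

section Commutators


variable {G : Type*} [Group G]

theorem exists_list_prod_eq_of_mem_commutator {g : G} (hg : g ∈ commutator G) :
    ∃ l : List G, (∀ x ∈ l, x ∈ commutatorSet G) ∧ l.prod = g := by
  have hinv : (commutatorSet G)⁻¹ = commutatorSet G := by
    ext x
    simp only [Set.mem_inv, mem_commutatorSet_iff]
    exact ⟨fun ⟨a, b, h⟩ => ⟨b, a, by rw [← commutatorElement_inv, h, inv_inv]⟩,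
      fun ⟨a, b, h⟩ => ⟨b, a, by rw [← commutatorElement_inv, h]⟩⟩
  rw [commutator_eq_closure, ← Subgroup.mem_toSubmonoid, Subgroup.closure_toSubmonoid, hinv,
    Set.union_self] at hg
  exact Submonoid.exists_list_of_mem_closure hg

theorem exists_commutatorLength_le [Finite G] :
    ∃ K, ∀ g ∈ commutator G, ∃ l : List G, l.length ≤ K ∧ (∀ x ∈ l, x ∈ commutatorSet G) ∧
      l.prod = g := by
  choose l hl using fun g : commutator G => exists_list_prod_eq_of_mem_commutator g.2
  obtain ⟨K, hK⟩ := (Set.finite_range fun g => (l g).length).bddAbove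
  exact ⟨K, fun g hg => ⟨l ⟨g, hg⟩, hK ⟨_, rfl⟩, hl ⟨g, hg⟩⟩⟩

end Commutators

section SetAlgebra

variable {X : Type*} {A : Set (Set X)}

theorem IsSetAlgebra.measureTheory_isSetAlgebra (hA : IsSetAlgebra A) :
    MeasureTheory.IsSetAlgebra A where
  empty_mem := by simpa using hA.2.2 _ hA.1
  compl_mem := hA.2.2
  union_mem s t hs ht := by
    simpa [Set.compl_inter] using hA.2.2 _ (hA.2.1 _ (hA.2.2 s hs) _ (hA.2.2 t ht))

theorem subset_rSetFam (Z : Set (Set X)) : Z ⊆ RSetFam Z := fun _ hS => by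
  simp only [RSetFam, Set.mem_union]
  tauto

/-- An exhausting chain that is closed under `R` from each level to the next stabilises: otherwise
the levels at which it strictly grows form a proper `R`-filtration. -/
theorem StrongUncountableCofinality.exists_eq (hcof : StrongUncountableCofinality A)
    {Y : ℕ → Set (Set X)} (hR : ∀ n, RSetFam (Y n) ⊆ Y (n + 1)) (hY : ⋃ n, Y n = A) :
    ∃ n, Y n = A := by
  have hmono : Monotone Y := monotone_nat_of_le_succ fun n => (subset_rSetFam _).trans (hR n)
  by_contra! hne
  have hgrow : ∃ᶠ n in atTop, Y n ≠ Y (n + 1) := by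
    rw [frequently_atTop]
    intro N
    by_contra! hconst
    have hstable : ∀ n ≥ N, Y n = Y N :=
      Nat.le_induction rfl fun n hn ih => (hconst n hn).symm.trans ih
    refine hne N (subset_antisymm (hY ▸ subset_iUnion Y N) (hY ▸ iUnion_subset fun n => ?_))
    rcases le_total n N with h | h
    exacts [hmono h, (hstable n h).le]
  obtain ⟨φ, hφ, hφgrow⟩ := extraction_of_frequently_atTop hgrow
  have hstep (k : ℕ) : Y (φ k + 1) ⊆ Y (φ (k + 1)) := hmono (hφ k.lt_succ_self)
  refine hcof ⟨Y ∘ φ, fun k => hY ▸ subset_iUnion Y (φ k), fun k => ?_,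
    fun k => (hR _).trans (hstep k), ?_⟩
  · exact ((hmono (φ k).le_succ).ssubset_of_ne (hφgrow k)).trans_subset (hstep k)
  · refine hY ▸ subset_antisymm (iUnion_subset fun k => subset_iUnion Y (φ k)) ?_
    exact iUnion_mono' fun n => ⟨n, hmono (hφ.id_le n)⟩

end SetAlgebra

section MeasurableFunctions


variable {X H : Type*} [Group H] {A : Set (Set X)}

def measurableSubgroup (hA : IsSetAlgebra A) (H : Type*) [Group H] [Finite H] :
    Subgroup (X → H) where
  carrier := {f | ∀ h, f ⁻¹' {h} ∈ A}
  one_mem' h := by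
    classical
    have hA' := hA.measureTheory_isSetAlgebra
    rw [Pi.one_def, Set.preimage_const]
    split_ifs
    exacts [hA'.univ_mem, hA'.empty_mem]
  mul_mem' {f g} hf hg h := by
    have := Fintype.ofFinite H
    have hfib : (f * g) ⁻¹' {h} = ⋃ a ∈ Finset.univ, f ⁻¹' {a} ∩ g ⁻¹' {a⁻¹ * h} := by
      ext x
      simp [eq_inv_mul_iff_mul_eq]
    rw [hfib]
    exact hA.measureTheory_isSetAlgebra.biUnion_mem _ fun a _ =>
      hA.measureTheory_isSetAlgebra.inter_mem (hf a) (hg _)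
  inv_mem' {f} hf h := by
    have hfib : f⁻¹ ⁻¹' {h} = f ⁻¹' {h⁻¹} := by
      ext x
      simp [inv_eq_iff_eq_inv]
    exact hfib ▸ hf h⁻¹

theorem mulIndicator_const_mem_measurableSubgroup [Finite H] (hA : IsSetAlgebra A) {S : Set X}
    (hS : S ∈ A) (h : H) : S.mulIndicator (fun _ => h) ∈ measurableSubgroup hA H := by
  intro k
  have hA' := hA.measureTheory_isSetAlgebra
  rcases S.mulIndicator_const_preimage {k} h with hk | hk | hk | hk <;> rw [hk]
  exacts [hA'.univ_mem, hS, hA'.compl_mem hS, hA'.empty_mem]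

theorem mulIndicator_const_list_prod (S : Set X) (l : List H) :
    S.mulIndicator (fun _ => l.prod) = (l.map fun h => S.mulIndicator fun _ => h).prod :=
  map_list_prod ((Set.mulIndicatorHom H S).comp (Pi.constMonoidHom X H)) l

theorem commutatorElement_mulIndicator_const (S T : Set X) (a b : H) :
    ⁅S.mulIndicator (fun _ => a), T.mulIndicator (fun _ => b)⁆ =
      (S ∩ T).mulIndicator (fun _ => ⁅a, b⁆) := by
  funext x
  by_cases hS : x ∈ S <;> by_cases hT : x ∈ T <;>
    simp [hS, hT, commutatorElement_def]

theorem list_prod_mulIndicator_fiber [Fintype H] (f : X → H) :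
    ((Finset.univ : Finset H).toList.map fun h => (f ⁻¹' {h}).mulIndicator fun _ => h).prod =
      f := by
  classical
  funext x
  rw [Pi.list_prod_apply, List.map_map, List.prod_map_eq_pow_single (f x),
    List.count_eq_one_of_mem (Finset.nodup_toList _) (Finset.mem_toList.2 (Finset.mem_univ _))]
  · simp
  · intro h hne _
    simp [Ne.symm hne]

end MeasurableFunctions

section IndicatorLevels

variable {X H : Type*} [Group H] {A : Set (Set X)} {W : ℕ → Set (X → H)}

def indicatorLevel (A : Set (Set X)) (W : ℕ → Set (X → H)) (n : ℕ) : Set (Set X) :=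
  {S | S ∈ A ∧ ∀ h : H, S.mulIndicator (fun _ => h) ∈ W n}

namespace IsGroupFiltration

theorem monotone_indicatorLevel (hW : IsGroupFiltration W) : Monotone (indicatorLevel A W) :=
  fun _ _ hmn _ hS => ⟨hS.1, fun h => hW.monotone hmn (hS.2 h)⟩

theorem empty_mem_indicatorLevel (hW : IsGroupFiltration W) (hA : IsSetAlgebra A) (n : ℕ) :
    ∅ ∈ indicatorLevel A W n :=
  ⟨hA.measureTheory_isSetAlgebra.empty_mem, fun _ => by
    rw [Set.mulIndicator_empty]
    exact hW.one_mem n⟩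

theorem compl_mem_indicatorLevel (hW : IsGroupFiltration W) (hA : IsSetAlgebra A) {n : ℕ}
    {S : Set X} (huniv : univ ∈ indicatorLevel A W n) (hS : S ∈ indicatorLevel A W n) :
    Sᶜ ∈ indicatorLevel A W (n + 1) := by
  refine ⟨hA.measureTheory_isSetAlgebra.compl_mem hS.1, fun h => ?_⟩
  have hconst := huniv.2 h
  rw [Set.mulIndicator_univ] at hconst
  rw [Set.mulIndicator_compl]
  exact hW.mul_mem n _ hconst _ (hW.inv_mem n _ (hS.2 h))

/-- Intersections are paid for with commutators, via `⁅1_S a, 1_T b⁆ = 1_{S ∩ T} ⁅a, b⁆`. -/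
theorem inter_mem_indicatorLevel (hW : IsGroupFiltration W) (hA : IsSetAlgebra A) {K : ℕ}
    (hK : ∀ h : H, ∃ l : List H, l.length ≤ K ∧ (∀ x ∈ l, x ∈ commutatorSet H) ∧ l.prod = h)
    {n : ℕ} {S T : Set X} (hS : S ∈ indicatorLevel A W n) (hT : T ∈ indicatorLevel A W n) :
    S ∩ T ∈ indicatorLevel A W (n + 2 + K) := by
  refine ⟨hA.measureTheory_isSetAlgebra.inter_mem hS.1 hT.1, fun h => ?_⟩
  obtain ⟨l, hlK, hl, rfl⟩ := hK h
  have hcomm : ∀ f ∈ l.map fun g => (S ∩ T).mulIndicator fun _ => g, f ∈ W (n + 2) := by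
    intro f hf
    obtain ⟨g, hg, rfl⟩ := List.mem_map.1 hf
    obtain ⟨a, b, rfl⟩ := hl g hg
    rw [← commutatorElement_mulIndicator_const]
    exact hW.commutatorElement_mem (hS.2 a) (hT.2 b)
  rw [mulIndicator_const_list_prod]
  exact hW.monotone (by rw [List.length_map]; omega) (hW.list_prod_mem hcomm)

theorem rSetFam_indicatorLevel_subset (hW : IsGroupFiltration W) (hA : IsSetAlgebra A) {K : ℕ}
    (hK : ∀ h : H, ∃ l : List H, l.length ≤ K ∧ (∀ x ∈ l, x ∈ commutatorSet H) ∧ l.prod = h)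
    {n : ℕ} (huniv : univ ∈ indicatorLevel A W n) :
    RSetFam (indicatorLevel A W n) ⊆ indicatorLevel A W (n + (K + 4)) := by
  have hmono := hW.monotone_indicatorLevel (A := A)
  have hcompl {m : ℕ} {S : Set X} (hm : n ≤ m) (hS : S ∈ indicatorLevel A W m) :
      Sᶜ ∈ indicatorLevel A W (m + 1) :=
    hW.compl_mem_indicatorLevel hA (hmono hm huniv) hS
  have hinter {m : ℕ} {S T : Set X} (hS : S ∈ indicatorLevel A W m)
      (hT : T ∈ indicatorLevel A W m) : S ∩ T ∈ indicatorLevel A W (m + 2 + K) :=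
    hW.inter_mem_indicatorLevel hA hK hS hT
  rintro S (((((hS | hS) | ⟨S, hS, rfl⟩) | ⟨s, hs, t, ht, rfl⟩) | ⟨s, hs, t, ht, rfl⟩) |
    ⟨s, hs, t, ht, rfl⟩)
  · exact hmono (by omega) hS
  · rcases hS with rfl | rfl
    exacts [hW.empty_mem_indicatorLevel hA _, hmono (by omega) huniv]
  · exact hmono (by omega) (hcompl le_rfl hS)
  · show s ∪ t ∈ _
    rw [← compl_compl (s ∪ t), compl_union]
    exact hmono (by omega) (hcompl (by omega) (hinter (hcompl le_rfl hs) (hcompl le_rfl ht)))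
  · exact hmono (by omega) (hinter hs ht)
  · show s \ t ∈ _
    rw [sdiff_eq]
    exact hmono (by omega) (hinter (hmono (Nat.le_succ n) hs) (hcompl le_rfl ht))

theorem exists_mem_indicatorLevel [Finite H] (hW : IsGroupFiltration W) (hA : IsSetAlgebra A)
    (hcover : ∀ f ∈ measurableSubgroup hA H, ∃ n, f ∈ W n) {S : Set X} (hS : S ∈ A) :
    ∃ n, S ∈ indicatorLevel A W n := by
  have hev : ∀ᶠ n in atTop, ∀ h : H, S.mulIndicator (fun _ => h) ∈ W n := by
    refine eventually_all.2 fun h => ?_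
    obtain ⟨n, hn⟩ := hcover _ (mulIndicator_const_mem_measurableSubgroup hA hS h)
    exact eventually_atTop.2 ⟨n, fun m hm => hW.monotone hm hn⟩
  exact hev.exists.imp fun n hn => ⟨hS, hn⟩

theorem exists_forall_measurableSubgroup_mem [Finite H] (hW : IsGroupFiltration W)
    (hA : IsSetAlgebra A) (hcof : StrongUncountableCofinality A) (hperf : commutator H = ⊤)
    (hcover : ∀ f ∈ measurableSubgroup hA H, ∃ n, f ∈ W n) :
    ∃ N, ∀ f ∈ measurableSubgroup hA H, f ∈ W N := by
  have := Fintype.ofFinite H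
  obtain ⟨K, hK⟩ := exists_commutatorLength_le (G := H)
  replace hK (h : H) := hK h (hperf ▸ Subgroup.mem_top h)
  have hmono := hW.monotone_indicatorLevel (A := A)
  obtain ⟨n₀, hn₀⟩ := hW.exists_mem_indicatorLevel hA hcover hA.measureTheory_isSetAlgebra.univ_mem
  obtain ⟨m, hm⟩ := hcof.exists_eq (Y := fun m => indicatorLevel A W (n₀ + (K + 4) * m))
    (fun m => (hW.rSetFam_indicatorLevel_subset hA hK (hmono (by omega) hn₀)).trans
      (hmono (by rw [mul_add_one, add_assoc])))
    (subset_antisymm (iUnion_subset fun _ _ hS => hS.1) fun S hS =>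
      have ⟨n, hn⟩ := hW.exists_mem_indicatorLevel hA hcover hS
      mem_iUnion.2 ⟨n, hmono (by nlinarith) hn⟩)
  refine ⟨n₀ + (K + 4) * m + Fintype.card H, fun f hf => ?_⟩
  have hfib : ∀ g ∈ (Finset.univ : Finset H).toList.map
      fun h => (f ⁻¹' {h}).mulIndicator fun _ => h, g ∈ W (n₀ + (K + 4) * m) := by
    intro g hg
    obtain ⟨h, -, rfl⟩ := List.mem_map.1 hg
    exact (hm.symm ▸ hf h : f ⁻¹' {h} ∈ indicatorLevel A W _).2 h
  have hprod := hW.list_prod_mem hfib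
  rwa [list_prod_mulIndicator_fiber, List.length_map, Finset.length_toList,
    Finset.card_univ] at hprod

end IsGroupFiltration

end IndicatorLevels

theorem measurable_functions_stronglyBounded (X : Type) (A : Set (Set X))
    (hA : IsSetAlgebra A) (hcof : StrongUncountableCofinality A)
    (H : Type) [Group H] [Finite H] (hperf : commutator H = ⊤) :
    ∃ M : Subgroup (X → H),
      (M : Set (X → H)) = {f : X → H | ∀ h : H, f ⁻¹' {h} ∈ A} ∧
      StronglyBounded M := by
  refine ⟨measurableSubgroup hA H, rfl,
    stronglyBounded_of_forall_isGroupFiltration fun W hW hcover => ?_⟩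
  obtain ⟨N, hN⟩ := (hW.map (measurableSubgroup hA H).subtype).exists_forall_measurableSubgroup_mem
    hA hcof hperf fun f hf => (hcover ⟨f, hf⟩).imp fun n hn => ⟨_, hn, rfl⟩
  refine ⟨N, fun g => ?_⟩
  obtain ⟨g', hg', hg'g⟩ := hN g g.2
  rwa [Subtype.val_injective hg'g] at hg'
end
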